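/- Let a, b > 0, τ := min{2b/a, 2a^{1/2}/b, 2a^{3/2}/b}, α_τ := 2 a^{-1/2} b τ^{-2}, β_τ := a^{1/2} − 2 a^{-1/2} b τ^{-1}, and define f_τ(r) := ½ α_τ r² + β_τ r for 0 < r ≤ τ and f_τ(r) := a^{1/2} r − a^{-1/2} b for r ≥ τ. Then f_τ is globally C¹ on ℝ_{>0}, convex, C² on ℝ_{>0} \ {τ}, satisfies 2 f_τ''(r) − f_τ(r) f_τ'(r) + a r − b ≥ 0 for every r ∈ ℝ_{>0} \ {τ}, and lim_{r↓0} r^{-1} f_τ(r) = β_τ ≥ min{0, a^{1/2} − a^{-1} b², a^{1/2} − a^{-2} b²}. -/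

import Mathlib

/-!
On `(0, τ]` the profile is the parabola with `f(τ) = √a τ - b/√a` and `f'(τ) = √a`, so it is
`C¹`, and its derivative `ατ r + βτ`, continued by the constant `√a`, is nondecreasing since
`ατ ≥ 0`. Beyond `τ` the residual `2f'' - f f' + a r - b` vanishes identically. On the parabola
it equals `ατ/2` times the cubic `4 - √a (τ - r)(τ - 3r) - ατ r (τ - r)(2τ - r)`, which is
nonnegative on `[0, τ]` because `τ ≤ 2b/a` (equivalently `βτ ≤ 0`) and `τ ≤ 2√a/b`
(equivalently `ατ τ³ ≤ 4`). Finally, `βτ = √a - 2(b/√a)/τ` is increasing in `τ`, so taking `τ`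
as a minimum makes `βτ` the minimum of the three values `0`, `√a - b²/a`, `√a - b²/a²`.
-/

open Real Set Filter

/-- The concatenated profile: the tangent parabola on `(0, τ]` and the linear profile on
`[τ, ∞)`. -/
noncomputable def concatProfile (a b τ ατ βτ : ℝ) (r : ℝ) : ℝ :=
  if r ≤ τ then ατ / 2 * r ^ 2 + βτ * r else Real.sqrt a * r - b / Real.sqrt a

section Gluing

variable {F : Type*} [NormedAddCommGroup F] [NormedSpace ℝ F] {p q : ℝ → F} {τ x : ℝ} {d : F}

theorem HasDerivAt.ite_le_of_lt (hp : HasDerivAt p d x) (hx : x < τ) :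
    HasDerivAt (fun r => if r ≤ τ then p r else q r) d x :=
  hp.congr_of_eventuallyEq <| (eventually_lt_nhds hx).mono fun _ hr => if_pos hr.le

theorem HasDerivAt.ite_le_of_gt (hq : HasDerivAt q d x) (hx : τ < x) :
    HasDerivAt (fun r => if r ≤ τ then p r else q r) d x :=
  hq.congr_of_eventuallyEq <| (eventually_gt_nhds hx).mono fun _ hr => if_neg (not_le.2 hr)

theorem HasDerivAt.ite_le_self (hp : HasDerivAt p d τ) (hq : HasDerivAt q d τ)
    (hpq : p τ = q τ) : HasDerivAt (fun r => if r ≤ τ then p r else q r) d τ := by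
  have hleft : HasDerivWithinAt (fun r => if r ≤ τ then p r else q r) d (Iic τ) τ :=
    hp.hasDerivWithinAt.congr (fun _ hr => if_pos hr) (if_pos le_rfl)
  have hright : HasDerivWithinAt (fun r => if r ≤ τ then p r else q r) d (Ici τ) τ := by
    refine hq.hasDerivWithinAt.congr (fun r hr => ?_) (by simp [hpq])
    split_ifs with h
    · rw [le_antisymm h hr, hpq]
    · rfl
  simpa only [Iic_union_Ici, hasDerivWithinAt_univ] using hleft.union hright

end Gluing

theorem sub_mul_inv_min {s K x y : ℝ} (hK : 0 ≤ K) (hx : 0 < x) (hy : 0 < y) :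
    s - K * (min x y)⁻¹ = min (s - K * x⁻¹) (s - K * y⁻¹) := by
  rcases le_total x y with h | h
  · rw [min_eq_left h, min_eq_left]
    gcongr
  · rw [min_eq_right h, min_eq_right]
    gcongr

theorem sqrt_sub_mul_inv_min_eq {a b : ℝ} (ha : 0 < a) (hb : 0 < b) :
    √a - 2 * (b / √a) * (min (2 * b / a) (min (2 * √a / b) (2 * (a * √a) / b)))⁻¹ =
      min 0 (min (√a - b ^ 2 / a) (√a - b ^ 2 / a ^ 2)) := by
  have hs : 0 < √a := sqrt_pos.2 ha
  have hK : 0 ≤ 2 * (b / √a) := by positivity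
  rw [sub_mul_inv_min hK (by positivity) (by positivity),
    sub_mul_inv_min hK (by positivity) (by positivity)]
  have ha' : a = √a ^ 2 := (sq_sqrt ha.le).symm
  set s := √a
  rw [ha']
  congr 1
  · field_simp; ring
  · congr 1 <;> field_simp

/-- For `3r ≤ τ` the `s`-term is worst at `s = ατ`; for `3r ≥ τ` it has the good sign. -/
theorem tangentCubic_nonneg {α s τ r : ℝ} (hα : 0 ≤ α) (hs₀ : 0 ≤ s) (hs : s ≤ α * τ)
    (hατ : α * τ ^ 3 ≤ 4) (hr : 0 ≤ r) (hrτ : r ≤ τ) :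
    0 ≤ 4 - s * (τ - r) * (τ - 3 * r) - α * r * (τ - r) * (2 * τ - r) := by
  have hτr := sub_nonneg.2 hrτ
  rcases le_total (3 * r) τ with h | h
  · have hs_term : s * (τ - r) * (τ - 3 * r) ≤ α * τ * (τ - r) * (τ - 3 * r) :=
      mul_le_mul_of_nonneg_right (mul_le_mul_of_nonneg_right hs hτr) (sub_nonneg.2 h)
    have hcubic : 0 ≤ 2 * τ ^ 2 * r - r ^ 3 := by
      nlinarith [mul_nonneg (mul_nonneg hr hτr) (add_nonneg (hr.trans hrτ) hr),
        mul_nonneg hr (sq_nonneg τ)]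
    nlinarith [mul_nonneg hα hcubic]
  · have hs_term : 0 ≤ s * (τ - r) * (3 * r - τ) :=
      mul_nonneg (mul_nonneg hs₀ hτr) (sub_nonneg.2 h)
    have hcubic : 0 ≤ τ ^ 3 - r * (τ - r) * (2 * τ - r) := by
      nlinarith [pow_nonneg hτr 3, mul_nonneg hr (sq_nonneg τ)]
    nlinarith [mul_nonneg hα hcubic]

theorem tangentParabola_residual_nonneg {α β τ r : ℝ} (hα : 0 ≤ α) (hβ : β ≤ 0)
    (hs : 0 ≤ α * τ + β) (hατ : α * τ ^ 3 ≤ 4) (hr : 0 ≤ r) (hrτ : r ≤ τ) :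
    0 ≤ 2 * α - (α / 2 * r ^ 2 + β * r) * (α * r + β) + (α * τ + β) ^ 2 * r
      - (α * τ + β) * (α * τ ^ 2 / 2) := by
  have key : 2 * α - (α / 2 * r ^ 2 + β * r) * (α * r + β) + (α * τ + β) ^ 2 * r
      - (α * τ + β) * (α * τ ^ 2 / 2) = α / 2 * (4 - (α * τ + β) * (τ - r) * (τ - 3 * r)
        - α * r * (τ - r) * (2 * τ - r)) := by ring
  rw [key]
  exact mul_nonneg (by positivity) (tangentCubic_nonneg hα hs (by linarith) hατ hr hrτ)

namespace concatProfile

variable {a b τ ατ βτ r : ℝ}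

theorem of_le (h : r ≤ τ) : concatProfile a b τ ατ βτ r = ατ / 2 * r ^ 2 + βτ * r :=
  if_pos h

theorem of_gt (h : τ < r) : concatProfile a b τ ατ βτ r = √a * r - b / √a :=
  if_neg (not_le.2 h)

theorem hasDerivAt (hslope : ατ * τ + βτ = √a)
    (hval : ατ / 2 * τ ^ 2 + βτ * τ = √a * τ - b / √a) (r : ℝ) :
    HasDerivAt (concatProfile a b τ ατ βτ) (if r ≤ τ then ατ * r + βτ else √a) r := by
  have hp : ∀ x, HasDerivAt (fun y => ατ / 2 * y ^ 2 + βτ * y) (ατ * x + βτ) x := fun x =>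
    (((hasDerivAt_pow 2 x).const_mul (ατ / 2)).add ((hasDerivAt_id x).const_mul βτ)).congr_deriv
      (by push_cast; ring)
  have hq : ∀ x, HasDerivAt (fun y => √a * y - b / √a) √a x := fun x => by
    simpa using ((hasDerivAt_id x).const_mul √a).sub_const (b / √a)
  rcases lt_trichotomy r τ with h | rfl | h
  · rw [if_pos h.le]
    exact (hp r).ite_le_of_lt h
  · rw [if_pos le_rfl]
    exact (hp r).ite_le_self ((hq r).congr_deriv hslope.symm) hval
  · rw [if_neg (not_le.2 h)]
    exact (hq r).ite_le_of_gt h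

theorem deriv_eq (hslope : ατ * τ + βτ = √a)
    (hval : ατ / 2 * τ ^ 2 + βτ * τ = √a * τ - b / √a) :
    deriv (concatProfile a b τ ατ βτ) = fun r => if r ≤ τ then ατ * r + βτ else √a :=
  funext fun r => (hasDerivAt hslope hval r).deriv

theorem continuous_deriv (hslope : ατ * τ + βτ = √a)
    (hval : ατ / 2 * τ ^ 2 + βτ * τ = √a * τ - b / √a) :
    Continuous (deriv (concatProfile a b τ ατ βτ)) := by
  rw [deriv_eq hslope hval]
  exact Continuous.if_le (by fun_prop) continuous_const continuous_id continuous_const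
    fun r hr => hr ▸ hslope

theorem convexOn (hα : 0 ≤ ατ) (hslope : ατ * τ + βτ = √a)
    (hval : ατ / 2 * τ ^ 2 + βτ * τ = √a * τ - b / √a) :
    ConvexOn ℝ univ (concatProfile a b τ ατ βτ) := by
  refine Monotone.convexOn_univ_of_deriv (fun r => (hasDerivAt hslope hval r).differentiableAt) ?_
  rw [deriv_eq hslope hval]
  intro x y hxy
  dsimp only
  split_ifs with hx hy hy
  · nlinarith
  · nlinarith
  · linarith
  · rfl

theorem hasDerivAt_deriv_of_lt (hslope : ατ * τ + βτ = √a)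
    (hval : ατ / 2 * τ ^ 2 + βτ * τ = √a * τ - b / √a) (h : r < τ) :
    HasDerivAt (deriv (concatProfile a b τ ατ βτ)) ατ r := by
  rw [deriv_eq hslope hval]
  exact (((hasDerivAt_id r).const_mul ατ).add_const βτ |>.congr_deriv (mul_one ατ)).ite_le_of_lt h

theorem hasDerivAt_deriv_of_gt (hslope : ατ * τ + βτ = √a)
    (hval : ατ / 2 * τ ^ 2 + βτ * τ = √a * τ - b / √a) (h : τ < r) :
    HasDerivAt (deriv (concatProfile a b τ ατ βτ)) 0 r := by
  rw [deriv_eq hslope hval]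
  exact (hasDerivAt_const r √a).ite_le_of_gt h

theorem residual_nonneg (ha : 0 < a) (hα : 0 ≤ ατ) (hβ : βτ ≤ 0) (hατ : ατ * τ ^ 3 ≤ 4)
    (hslope : ατ * τ + βτ = √a) (hcurv : ατ * τ ^ 2 / 2 = b / √a) (hr : 0 ≤ r) (hne : r ≠ τ) :
    0 ≤ 2 * deriv (deriv (concatProfile a b τ ατ βτ)) r
      - concatProfile a b τ ατ βτ r * deriv (concatProfile a b τ ατ βτ) r + a * r - b := by
  have hval : ατ / 2 * τ ^ 2 + βτ * τ = √a * τ - b / √a := by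
    rw [← hcurv, ← hslope]; ring
  rw [(hasDerivAt hslope hval r).deriv]
  rcases hne.lt_or_gt with h | h
  · have ha' : a = (ατ * τ + βτ) ^ 2 := by rw [hslope, sq_sqrt ha.le]
    have hb' : b = (ατ * τ + βτ) * (ατ * τ ^ 2 / 2) := by
      rw [hslope, hcurv, mul_div_cancel₀ _ (sqrt_pos.2 ha).ne']
    rw [(hasDerivAt_deriv_of_lt hslope hval h).deriv, of_le h.le, if_pos h.le, ha', hb']
    exact tangentParabola_residual_nonneg hα hβ (hslope ▸ sqrt_nonneg a) hατ hr h.le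
  · have hlin : (√a * r - b / √a) * √a = a * r - b := by
      rw [sub_mul, div_mul_cancel₀ _ (sqrt_pos.2 ha).ne', mul_right_comm, mul_self_sqrt ha.le]
    rw [(hasDerivAt_deriv_of_gt hslope hval h).deriv, of_gt h, if_neg (not_le.2 h), hlin]
    linarith

theorem tendsto_div (hτ : 0 < τ) :
    Tendsto (fun r => concatProfile a b τ ατ βτ r / r) (nhdsWithin 0 (Ioi 0)) (nhds βτ) := by
  have hlin : Tendsto (fun r : ℝ => ατ / 2 * r + βτ) (nhdsWithin 0 (Ioi 0)) (nhds βτ) := by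
    have : Continuous (fun r : ℝ => ατ / 2 * r + βτ) := by fun_prop
    simpa using (this.tendsto 0).mono_left nhdsWithin_le_nhds
  refine hlin.congr' ?_
  filter_upwards [Ioo_mem_nhdsGT hτ] with r hr
  rw [of_le hr.2.le]
  field_simp [hr.1.ne']

end concatProfile

/-- the concatenated profile `f_τ` is `C¹` on `ℝ_{>0}`, convex, `C²` away from
`τ`, satisfies the stationary profile inequality `2 f_τ'' - f_τ f_τ' + a r - b ≥ 0` on
`ℝ_{>0} \ {τ}`, and `r⁻¹ f_τ(r) → β_τ ≥ min{0, a^{1/2} - a⁻¹b², a^{1/2} - a⁻²b²}` as `r ↓ 0`. -/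
theorem stmt15 (a b : ℝ) (ha : 0 < a) (hb : 0 < b)
    (τ ατ βτ : ℝ)
    (hτ : τ = min (2 * b / a) (min (2 * Real.sqrt a / b) (2 * (a * Real.sqrt a) / b)))
    (hατ : ατ = 2 * (b / Real.sqrt a) * τ⁻¹ ^ 2)
    (hβτ : βτ = Real.sqrt a - 2 * (b / Real.sqrt a) * τ⁻¹) :
    (∀ r ∈ Set.Ioi (0 : ℝ), DifferentiableAt ℝ (concatProfile a b τ ατ βτ) r) ∧
    ContinuousOn (deriv (concatProfile a b τ ατ βτ)) (Set.Ioi 0) ∧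
    ConvexOn ℝ (Set.Ioi 0) (concatProfile a b τ ατ βτ) ∧
    (∀ r ∈ Set.Ioi (0 : ℝ), r ≠ τ → DifferentiableAt ℝ (deriv (concatProfile a b τ ατ βτ)) r) ∧
    (∀ r ∈ Set.Ioi (0 : ℝ), r ≠ τ →
      2 * deriv (deriv (concatProfile a b τ ατ βτ)) r
          - concatProfile a b τ ατ βτ r * deriv (concatProfile a b τ ατ βτ) r + a * r - b ≥ 0) ∧
    Filter.Tendsto (fun r => concatProfile a b τ ατ βτ r / r)
      (nhdsWithin 0 (Set.Ioi 0)) (nhds βτ) ∧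
    βτ ≥ min 0 (min (Real.sqrt a - b ^ 2 / a) (Real.sqrt a - b ^ 2 / a ^ 2)) := by
  have hτ0 : 0 < τ := by rw [hτ]; positivity
  have hβ : βτ = min 0 (min (√a - b ^ 2 / a) (√a - b ^ 2 / a ^ 2)) := by
    rw [hβτ, hτ, sqrt_sub_mul_inv_min_eq ha hb]
  have hslope : ατ * τ + βτ = √a := by rw [hατ, hβτ]; field_simp; ring
  have hcurv : ατ * τ ^ 2 / 2 = b / √a := by rw [hατ]; field_simp
  have hval : ατ / 2 * τ ^ 2 + βτ * τ = √a * τ - b / √a := by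
    rw [← hcurv, ← hslope]; ring
  have hα : 0 ≤ ατ := by rw [hατ]; positivity
  have hατ3 : ατ * τ ^ 3 ≤ 4 := by
    have h : τ ≤ 2 * √a / b := hτ ▸ (min_le_right _ _).trans (min_le_left _ _)
    calc ατ * τ ^ 3 = 2 * (b / √a) * τ := by rw [hατ]; field_simp
      _ ≤ 2 * (b / √a) * (2 * √a / b) := by gcongr
      _ = 4 := by field_simp [(sqrt_pos.2 ha).ne']; ring
  refine ⟨fun r _ => (concatProfile.hasDerivAt hslope hval r).differentiableAt,
    (concatProfile.continuous_deriv hslope hval).continuousOn,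
    (concatProfile.convexOn hα hslope hval).subset (subset_univ _) (convex_Ioi 0),
    fun r _ hne => hne.lt_or_gt.elim
      (fun h => (concatProfile.hasDerivAt_deriv_of_lt hslope hval h).differentiableAt)
      (fun h => (concatProfile.hasDerivAt_deriv_of_gt hslope hval h).differentiableAt),
    fun r hr hne => concatProfile.residual_nonneg ha hα (hβ.trans_le (min_le_left _ _)) hατ3
      hslope hcurv (le_of_lt hr) hne,
    concatProfile.tendsto_div hτ0, hβ.ge⟩
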